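/- For the Dyck-language SCFG with production rule S → p₁·ab + p₂·abS + p₃·aSb + p₄·aSbS, where p₁, p₂, p₃, p₄ ≥ 0, ∑ᵢ pᵢ = 1 and p₁ > 0: the iteration G₀ = 0, G_{k+1} = p₁ z² + (p₂ + p₃) z² G_k + p₄ z² G_k² converges coefficientwise to a formal power series G ∈ ℝ[[z]] with nonnegative coefficients that satisfies G = p₁ z² + (p₂ + p₃) z² G + p₄ z² G² (equivalently p₄ z² G² + ((p₂+p₃) z² − 1) G + p₁ z² = 0); moreover the coefficients of G sum to at most 1, and G is algebraic over ℝ[z]. -/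

import Mathlib

open PowerSeries Filter

/-- The iteration `G₀ = 0`, `G_{k+1} = p₁ z² + (p₂ + p₃) z² G_k + p₄ z² G_k²`
associated to the Dyck-language SCFG `S → p₁·ab + p₂·abS + p₃·aSb + p₄·aSbS`. -/
noncomputable def dyckIter (p₁ p₂ p₃ p₄ : ℝ) : ℕ → PowerSeries ℝ
  | 0 => 0
  | k + 1 =>
      PowerSeries.C p₁ * PowerSeries.X ^ 2 +
      PowerSeries.C (p₂ + p₃) * PowerSeries.X ^ 2 * dyckIter p₁ p₂ p₃ p₄ k +
      PowerSeries.C p₄ * PowerSeries.X ^ 2 * (dyckIter p₁ p₂ p₃ p₄ k) ^ 2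

/-- `f ∈ ℝ[[z]]` is algebraic over the polynomial ring ℝ[z]: some nonzero
`Q ∈ ℝ[z][y]` vanishes at `f`. -/
def IsAlgebraicPS (f : PowerSeries ℝ) : Prop :=
  ∃ Q : Polynomial (Polynomial ℝ), Q ≠ 0 ∧ Polynomial.aeval f Q = 0

/-! The step map `F A = a X² + b X² A + c X² A²` satisfies
`F A - F B = X² (A - B) (b + c (A + B))`, so it raises the `X`-adic order of differences by two.
Hence the iterates `Fᵏ 0` stabilise coefficientwise, and their limit `G` is a fixed point of `F`,
i.e. a root of the quadratic `c X² Y² + (b X² - 1) Y + a X²` over `R[X]`, which is nonzero.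

For `a, b, c ≥ 0` every iterate has nonnegative coefficients. Partial coefficient sums of a product
are at most the product of the partial sums, so the partial sums of `F A` are bounded by
`a + b t + c t²` when those of `A` are bounded by `t`; as `a + b + c ≤ 1`, the bound `t = 1`
propagates from `0` to every iterate and hence to `G`. -/

open Finset

namespace PowerSeries

section NonnegCoeff

variable {R : Type*} [CommSemiring R] [PartialOrder R]

theorem coeff_X_pow_mul_nonneg {A : R⟦X⟧} (hA : ∀ n, 0 ≤ coeff n A) (k n : ℕ) :
    0 ≤ coeff n (X ^ k * A) := by
  rw [coeff_X_pow_mul']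
  split_ifs
  exacts [hA _, le_rfl]

variable [IsOrderedRing R]

theorem coeff_mul_nonneg {A B : R⟦X⟧} (hA : ∀ n, 0 ≤ coeff n A) (hB : ∀ n, 0 ≤ coeff n B)
    (n : ℕ) : 0 ≤ coeff n (A * B) := by
  rw [coeff_mul]
  exact sum_nonneg fun p _ => mul_nonneg (hA p.1) (hB p.2)

theorem sum_range_coeff_X_pow_mul_le {A : R⟦X⟧} (hA : ∀ n, 0 ≤ coeff n A) (k M : ℕ) :
    ∑ n ∈ range M, coeff n (X ^ k * A) ≤ ∑ n ∈ range M, coeff n A := by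
  calc ∑ n ∈ range M, coeff n (X ^ k * A)
      ≤ ∑ n ∈ range (k + M), coeff n (X ^ k * A) :=
        sum_le_sum_of_subset_of_nonneg (range_subset_range.2 (by omega))
          fun n _ _ => coeff_X_pow_mul_nonneg hA k n
    _ = ∑ n ∈ range M, coeff n A := by
        rw [sum_range_add, sum_eq_zero fun n hn => ?_, zero_add]
        · exact sum_congr rfl fun n _ => by rw [add_comm, coeff_X_pow_mul]
        · rw [coeff_X_pow_mul', if_neg (by simpa using hn)]

theorem sum_range_coeff_mul_le {A B : R⟦X⟧} (hA : ∀ n, 0 ≤ coeff n A)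
    (hB : ∀ n, 0 ≤ coeff n B) (M : ℕ) :
    ∑ n ∈ range M, coeff n (A * B) ≤ (∑ n ∈ range M, coeff n A) * ∑ n ∈ range M, coeff n B := by
  calc ∑ n ∈ range M, coeff n (A * B)
      = ∑ m ∈ range M, ∑ k ∈ range (m + 1), coeff k A * coeff (m - k) B := by
        simp only [coeff_mul,
          Nat.sum_antidiagonal_eq_sum_range_succ fun i j => coeff i A * coeff j B]
    _ = ∑ m ∈ range M, coeff m A * ∑ k ∈ range (M - m), coeff k B := by
        rw [sum_range_diag_flip M fun i j => coeff i A * coeff j B]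
        simp only [mul_sum]
    _ ≤ ∑ m ∈ range M, coeff m A * ∑ k ∈ range M, coeff k B := by
        gcongr with m
        · exact hA m
        · exact fun k _ _ => hB k
        · omega
    _ = _ := (sum_mul ..).symm

end NonnegCoeff

section QuadStep

variable {R : Type*}

noncomputable def quadStep [CommSemiring R] (a b c : R) (A : R⟦X⟧) : R⟦X⟧ :=
  C a * X ^ 2 + C b * X ^ 2 * A + C c * X ^ 2 * A ^ 2

theorem quadStep_eq_X_sq_mul [CommSemiring R] (a b c : R) (A : R⟦X⟧) :
    quadStep a b c A = X ^ 2 * (C a + C b * A + C c * A ^ 2) := by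
  unfold quadStep
  ring

theorem X_pow_dvd_quadStep_sub [CommRing R] (a b c : R) {A B : R⟦X⟧} {n : ℕ}
    (h : X ^ n ∣ A - B) : X ^ (n + 2) ∣ quadStep a b c A - quadStep a b c B := by
  obtain ⟨D, hD⟩ := h
  refine ⟨D * (C b + C c * (A + B)), ?_⟩
  rw [quadStep_eq_X_sq_mul, quadStep_eq_X_sq_mul]
  linear_combination (X ^ 2 * (C b + C c * (A + B))) * hD

theorem X_pow_dvd_iterate_quadStep_sub [CommRing R] (a b c : R) (A : R⟦X⟧) {k j : ℕ}
    (hkj : k ≤ j) : X ^ k ∣ (quadStep a b c)^[j] A - (quadStep a b c)^[k] A := by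
  induction k generalizing j with
  | zero => simp
  | succ k ih =>
    obtain ⟨j, rfl⟩ : ∃ i, j = i + 1 := ⟨j - 1, by omega⟩
    rw [Function.iterate_succ_apply', Function.iterate_succ_apply']
    exact (pow_dvd_pow X (by omega)).trans (X_pow_dvd_quadStep_sub a b c (ih (by omega)))

noncomputable def quadStepLimit [CommSemiring R] (a b c : R) : R⟦X⟧ :=
  mk fun n => coeff n ((quadStep a b c)^[n + 1] 0)

theorem coeff_quadStepLimit [CommRing R] (a b c : R) {n k : ℕ} (hnk : n < k) :
    coeff n (quadStepLimit a b c) = coeff n ((quadStep a b c)^[k] 0) := by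
  rw [quadStepLimit, coeff_mk, eq_comm, ← sub_eq_zero, ← map_sub]
  exact X_pow_dvd_iff.1 (X_pow_dvd_iterate_quadStep_sub a b c 0 hnk) n n.lt_add_one

theorem X_pow_dvd_quadStepLimit_sub [CommRing R] (a b c : R) (k : ℕ) :
    X ^ k ∣ quadStepLimit a b c - (quadStep a b c)^[k] 0 := by
  refine X_pow_dvd_iff.2 fun n hn => ?_
  rw [map_sub, coeff_quadStepLimit a b c hn, sub_self]

theorem quadStepLimit_eq_quadStep [CommRing R] (a b c : R) :
    quadStepLimit a b c = quadStep a b c (quadStepLimit a b c) := by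
  set G := quadStepLimit a b c
  have hdvd : ∀ k, X ^ k ∣ G - quadStep a b c G := fun k => by
    have hsplit : G - quadStep a b c G = (G - (quadStep a b c)^[k + 1] 0) -
        (quadStep a b c G - quadStep a b c ((quadStep a b c)^[k] 0)) := by
      rw [Function.iterate_succ_apply']
      ring
    rw [hsplit]
    exact dvd_sub ((pow_dvd_pow X k.le_succ).trans (X_pow_dvd_quadStepLimit_sub a b c _))
      ((pow_dvd_pow X (by omega)).trans
        (X_pow_dvd_quadStep_sub a b c (X_pow_dvd_quadStepLimit_sub a b c k)))
  ext n
  rw [← sub_eq_zero, ← map_sub]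
  exact X_pow_dvd_iff.1 (hdvd (n + 1)) n n.lt_add_one

theorem tendsto_coeff_iterate_quadStep [CommRing R] [TopologicalSpace R] (a b c : R) (n : ℕ) :
    Tendsto (fun k => coeff n ((quadStep a b c)^[k] 0)) atTop
      (nhds (coeff n (quadStepLimit a b c))) :=
  tendsto_atTop_of_eventually_const (i₀ := n + 1) fun _ hk =>
    (coeff_quadStepLimit a b c hk).symm

theorem isAlgebraic_of_eq_quadStep [CommRing R] [Nontrivial R] {a b c : R} {G : R⟦X⟧}
    (hG : G = quadStep a b c G) : IsAlgebraic (Polynomial R) G := by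
  refine ⟨Polynomial.C (Polynomial.C c * Polynomial.X ^ 2) * Polynomial.X ^ 2 +
    Polynomial.C (Polynomial.C b * Polynomial.X ^ 2 - 1) * Polynomial.X +
    Polynomial.C (Polynomial.C a * Polynomial.X ^ 2), ?_, ?_⟩
  · intro hQ
    -- the `Y`-coefficient `b X² - 1` has constant term `-1`
    have h := congrArg (fun Q => Polynomial.coeff (Polynomial.coeff Q 1) 0) hQ
    simp only [Polynomial.coeff_add, Polynomial.coeff_C_mul_X_pow, Polynomial.coeff_C_mul_X,
      Polynomial.coeff_C] at h
    simp at h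
  · have hC : ∀ r : R, algebraMap (Polynomial R) R⟦X⟧ (Polynomial.C r) = C r := fun r => by
      simp [algebraMap_apply']
    have hX : algebraMap (Polynomial R) R⟦X⟧ Polynomial.X = X := by
      simp [algebraMap_apply']
    simp only [map_add, map_mul, map_pow, map_sub, map_one, Polynomial.aeval_C, Polynomial.aeval_X,
      hC, hX]
    rw [quadStep] at hG
    linear_combination -hG

end QuadStep

section QuadStepNonneg

variable {R : Type*}

section Step

variable [CommSemiring R] [PartialOrder R] [IsOrderedRing R] {a b c : R}

theorem coeff_C_add_C_mul_add_C_mul_sq_nonneg (ha : 0 ≤ a) (hb : 0 ≤ b) (hc : 0 ≤ c)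
    {A : R⟦X⟧} (hA : ∀ n, 0 ≤ coeff n A) (n : ℕ) :
    0 ≤ coeff n (C a + C b * A + C c * A ^ 2) := by
  have hconst : 0 ≤ coeff n (C a) := by
    rw [coeff_C]
    split_ifs
    exacts [ha, le_rfl]
  rw [map_add, map_add, coeff_C_mul, coeff_C_mul, sq]
  exact add_nonneg (add_nonneg hconst (mul_nonneg hb (hA n)))
    (mul_nonneg hc (coeff_mul_nonneg hA hA n))

theorem coeff_quadStep_nonneg (ha : 0 ≤ a) (hb : 0 ≤ b) (hc : 0 ≤ c) {A : R⟦X⟧}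
    (hA : ∀ n, 0 ≤ coeff n A) (n : ℕ) : 0 ≤ coeff n (quadStep a b c A) := by
  rw [quadStep_eq_X_sq_mul]
  exact coeff_X_pow_mul_nonneg (coeff_C_add_C_mul_add_C_mul_sq_nonneg ha hb hc hA) 2 n

theorem sum_range_coeff_quadStep_le {t : R} (ha : 0 ≤ a) (hb : 0 ≤ b) (hc : 0 ≤ c) {A : R⟦X⟧}
    (hA : ∀ n, 0 ≤ coeff n A) {M : ℕ} (ht : ∑ n ∈ range M, coeff n A ≤ t) :
    ∑ n ∈ range M, coeff n (quadStep a b c A) ≤ a + b * t + c * t ^ 2 := by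
  have hS : 0 ≤ ∑ n ∈ range M, coeff n A := sum_nonneg fun n _ => hA n
  have hconst : ∑ n ∈ range M, coeff n (C a) ≤ a := by
    simp only [coeff_C, sum_ite_eq', mem_range]
    split_ifs <;> simp [ha]
  have hsq : ∑ n ∈ range M, coeff n (A ^ 2) ≤ t ^ 2 :=
    calc ∑ n ∈ range M, coeff n (A ^ 2) ≤ (∑ n ∈ range M, coeff n A) ^ 2 := by
          rw [sq, sq]; exact sum_range_coeff_mul_le hA hA M
      _ ≤ t ^ 2 := pow_le_pow_left₀ hS ht 2
  calc ∑ n ∈ range M, coeff n (quadStep a b c A)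
      ≤ ∑ n ∈ range M, coeff n (C a + C b * A + C c * A ^ 2) := by
        rw [quadStep_eq_X_sq_mul]
        exact sum_range_coeff_X_pow_mul_le
          (coeff_C_add_C_mul_add_C_mul_sq_nonneg ha hb hc hA) 2 M
    _ = ∑ n ∈ range M, coeff n (C a) + b * ∑ n ∈ range M, coeff n A
          + c * ∑ n ∈ range M, coeff n (A ^ 2) := by
        simp only [map_add, coeff_C_mul, sum_add_distrib, mul_sum]
    _ ≤ a + b * t + c * t ^ 2 := by gcongr

end Step

variable [CommRing R] [PartialOrder R] [IsOrderedRing R] {a b c : R}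

theorem coeff_iterate_quadStep_nonneg (ha : 0 ≤ a) (hb : 0 ≤ b) (hc : 0 ≤ c) (k n : ℕ) :
    0 ≤ coeff n ((quadStep a b c)^[k] 0) := by
  induction k generalizing n with
  | zero => simp
  | succ k ih =>
    rw [Function.iterate_succ_apply']
    exact coeff_quadStep_nonneg ha hb hc ih n

theorem sum_range_coeff_iterate_quadStep_le_one (ha : 0 ≤ a) (hb : 0 ≤ b) (hc : 0 ≤ c)
    (habc : a + b + c ≤ 1) (k M : ℕ) : ∑ n ∈ range M, coeff n ((quadStep a b c)^[k] 0) ≤ 1 := by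
  induction k with
  | zero => simp
  | succ k ih =>
    rw [Function.iterate_succ_apply']
    calc _ ≤ a + b * 1 + c * 1 ^ 2 :=
          sum_range_coeff_quadStep_le ha hb hc (coeff_iterate_quadStep_nonneg ha hb hc k) ih
      _ ≤ 1 := by simpa using habc

theorem coeff_quadStepLimit_nonneg (ha : 0 ≤ a) (hb : 0 ≤ b) (hc : 0 ≤ c) (n : ℕ) :
    0 ≤ coeff n (quadStepLimit a b c) := by
  rw [coeff_quadStepLimit a b c n.lt_add_one]
  exact coeff_iterate_quadStep_nonneg ha hb hc _ n

theorem sum_range_coeff_quadStepLimit_le_one (ha : 0 ≤ a) (hb : 0 ≤ b) (hc : 0 ≤ c)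
    (habc : a + b + c ≤ 1) (M : ℕ) : ∑ n ∈ range M, coeff n (quadStepLimit a b c) ≤ 1 := by
  rw [sum_congr rfl fun n hn => coeff_quadStepLimit a b c (mem_range.1 hn)]
  exact sum_range_coeff_iterate_quadStep_le_one ha hb hc habc M M

end QuadStepNonneg

end PowerSeries

theorem dyckIter_eq_iterate (p₁ p₂ p₃ p₄ : ℝ) (k : ℕ) :
    dyckIter p₁ p₂ p₃ p₄ k = (quadStep p₁ (p₂ + p₃) p₄)^[k] 0 := by
  induction k with
  | zero => rfl
  | succ k ih => rw [Function.iterate_succ_apply', ← ih]; rfl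

theorem dyck_scfg_genfun_general (p₁ p₂ p₃ p₄ : ℝ)
    (h₁ : 0 ≤ p₁) (h₂ : 0 ≤ p₂) (h₃ : 0 ≤ p₃) (h₄ : 0 ≤ p₄)
    (hsum : p₁ + p₂ + p₃ + p₄ = 1) :
    ∃ G : PowerSeries ℝ,
      (∀ n : ℕ, Tendsto (fun k => PowerSeries.coeff n (dyckIter p₁ p₂ p₃ p₄ k))
        atTop (nhds (PowerSeries.coeff n G))) ∧
      (∀ n : ℕ, 0 ≤ PowerSeries.coeff n G) ∧
      G = PowerSeries.C p₁ * PowerSeries.X ^ 2 +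
          PowerSeries.C (p₂ + p₃) * PowerSeries.X ^ 2 * G +
          PowerSeries.C p₄ * PowerSeries.X ^ 2 * G ^ 2 ∧
      Summable (fun n => PowerSeries.coeff n G) ∧
      (∑' n : ℕ, PowerSeries.coeff n G) ≤ 1 ∧
      IsAlgebraicPS G := by
  have h₂₃ : 0 ≤ p₂ + p₃ := add_nonneg h₂ h₃
  have hmass : p₁ + (p₂ + p₃) + p₄ ≤ 1 := by linarith
  have hnn := coeff_quadStepLimit_nonneg h₁ h₂₃ h₄
  have hle := sum_range_coeff_quadStepLimit_le_one h₁ h₂₃ h₄ hmass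
  have hfix := quadStepLimit_eq_quadStep p₁ (p₂ + p₃) p₄
  refine ⟨_, fun n => ?_, hnn, hfix, summable_of_sum_range_le hnn hle,
    Real.tsum_le_of_sum_range_le hnn hle, isAlgebraic_of_eq_quadStep hfix⟩
  simpa only [dyckIter_eq_iterate] using tendsto_coeff_iterate_quadStep p₁ (p₂ + p₃) p₄ n

/-- For the Dyck-language SCFG `S → p₁·ab + p₂·abS + p₃·aSb + p₄·aSbS`, the
fixed-point iteration converges coefficientwise to a power series `G` with
nonnegative coefficients satisfying `G = p₁ z² + (p₂+p₃) z² G + p₄ z² G²`;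
the coefficients of `G` sum to at most 1, and `G` is algebraic over ℝ[z]. -/
theorem dyck_scfg_genfun (p₁ p₂ p₃ p₄ : ℝ)
    (h₁ : 0 ≤ p₁) (h₂ : 0 ≤ p₂) (h₃ : 0 ≤ p₃) (h₄ : 0 ≤ p₄)
    (hsum : p₁ + p₂ + p₃ + p₄ = 1) (hpos : 0 < p₁) :
    ∃ G : PowerSeries ℝ,
      (∀ n : ℕ, Tendsto (fun k => PowerSeries.coeff n (dyckIter p₁ p₂ p₃ p₄ k))
        atTop (nhds (PowerSeries.coeff n G))) ∧
      (∀ n : ℕ, 0 ≤ PowerSeries.coeff n G) ∧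
      G = PowerSeries.C p₁ * PowerSeries.X ^ 2 +
          PowerSeries.C (p₂ + p₃) * PowerSeries.X ^ 2 * G +
          PowerSeries.C p₄ * PowerSeries.X ^ 2 * G ^ 2 ∧
      Summable (fun n => PowerSeries.coeff n G) ∧
      (∑' n : ℕ, PowerSeries.coeff n G) ≤ 1 ∧
      IsAlgebraicPS G :=
  dyck_scfg_genfun_general p₁ p₂ p₃ p₄ h₁ h₂ h₃ h₄ hsum
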